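/- Let ψ_1, …, ψ_n be unit vectors in ℂ^d and let p_1, …, p_n be strictly positive reals summing to 1. Let G be the n×n Gram matrix with entries G_{ij} = √(p_i p_j)·⟨ψ_i, ψ_j⟩. Then ∑_{i=1}^{n} ((√G)_{ii})² ≥ ∑_{i=1}^{n} p_i² / (∑_{j=1}^{n} p_j·|⟨ψ_i, ψ_j⟩|²). -/

import Mathlib

/-!
The inequality holds termwise. Let `T = G^{1/4}` and `m k = (T^(2k))ᵢᵢ`. Cauchy–Schwarz applied to rows of powers
of the Hermitian matrix `T` gives `m 2 ^ 2 ≤ m 1 * m 3` and `m 3 ^ 2 ≤ m 2 * m 4`, hence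
`m 2 ^ 3 ≤ m 1 ^ 2 * m 4`, i.e. `Gᵢᵢ³ ≤ ((√G)ᵢᵢ)² (G²)ᵢᵢ`. For the Gram matrix `Gᵢᵢ = pᵢ` and
`(G²)ᵢᵢ = ∑ⱼ |Gᵢⱼ|² = pᵢ ∑ⱼ pⱼ |⟨ψᵢ, ψⱼ⟩|²`.
-/

open Matrix
open scoped ComplexOrder

/-- The Mathlib (Dec 2024) definition of `Matrix.PosSemidef.sqrt`, removed since. -/
noncomputable def Matrix.PosSemidef.sqrt {n : Type*} [Fintype n] [DecidableEq n] {𝕜 : Type*} [RCLike 𝕜]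
    {A : Matrix n n 𝕜} (hA : A.PosSemidef) : Matrix n n 𝕜 :=
  (hA.1.eigenvectorUnitary : Matrix n n 𝕜) * diagonal (fun i => ((√(hA.1.eigenvalues i) : ℝ) : 𝕜)) *
    (star hA.1.eigenvectorUnitary : Matrix n n 𝕜)

namespace Matrix

variable {m n 𝕜 : Type*} [Fintype n] [RCLike 𝕜]

lemma mul_conjTranspose_apply_eq_inner (A B : Matrix m n 𝕜) (i j : m) :
    (A * Bᴴ) i j = inner 𝕜 (WithLp.toLp 2 (B j)) (WithLp.toLp 2 (A i)) := rfl

lemma re_mul_conjTranspose_self_apply (A : Matrix m n 𝕜) (i : m) :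
    RCLike.re ((A * Aᴴ) i i) = ∑ k, ‖A i k‖ ^ 2 := by
  rw [mul_conjTranspose_apply_eq_inner, ← norm_sq_eq_re_inner, EuclideanSpace.norm_sq_eq]

lemma norm_mul_conjTranspose_apply_sq_le (A B : Matrix m n 𝕜) (i j : m) :
    ‖(A * Bᴴ) i j‖ ^ 2 ≤ RCLike.re ((A * Aᴴ) i i) * RCLike.re ((B * Bᴴ) j j) := by
  rw [mul_conjTranspose_apply_eq_inner, mul_conjTranspose_apply_eq_inner,
    mul_conjTranspose_apply_eq_inner, ← norm_sq_eq_re_inner, ← norm_sq_eq_re_inner, mul_comm, ← mul_pow]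
  gcongr
  exact norm_inner_le_norm _ _

namespace IsHermitian

variable [DecidableEq n] {H : Matrix n n 𝕜}

lemma re_pow_two_mul_apply_nonneg (hH : H.IsHermitian) (a : ℕ) (i : n) :
    0 ≤ RCLike.re ((H ^ (2 * a)) i i) := by
  have := re_mul_conjTranspose_self_apply (H ^ a) i
  rw [(hH.pow a).eq, ← pow_add, ← two_mul] at this
  rw [this]
  positivity

lemma re_pow_add_apply_sq_le (hH : H.IsHermitian) (a b : ℕ) (i : n) :
    RCLike.re ((H ^ (a + b)) i i) ^ 2 ≤
      RCLike.re ((H ^ (2 * a)) i i) * RCLike.re ((H ^ (2 * b)) i i) := by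
  calc RCLike.re ((H ^ (a + b)) i i) ^ 2 ≤ ‖(H ^ (a + b)) i i‖ ^ 2 := by
        rw [← sq_abs]; gcongr; exact RCLike.abs_re_le_norm _
    _ ≤ _ := by
        have := norm_mul_conjTranspose_apply_sq_le (H ^ a) (H ^ b) i i
        simpa only [(hH.pow a).eq, (hH.pow b).eq, ← pow_add, ← two_mul] using this

end IsHermitian

end Matrix

lemma pow_three_le_sq_mul_of_sq_le_mul {a b c e : ℝ} (hb : 0 ≤ b) (he : 0 ≤ e)
    (hbc : b ^ 2 ≤ a * c) (hce : c ^ 2 ≤ b * e) : b ^ 3 ≤ a ^ 2 * e := by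
  rcases hb.eq_or_lt with rfl | hb
  · rw [zero_pow three_ne_zero]; positivity
  have : b ^ 4 ≤ b * (a ^ 2 * e) := calc
    b ^ 4 = (b ^ 2) ^ 2 := by ring
    _ ≤ (a * c) ^ 2 := by gcongr
    _ = a ^ 2 * c ^ 2 := by ring
    _ ≤ a ^ 2 * (b * e) := by gcongr
    _ = b * (a ^ 2 * e) := by ring
  nlinarith

namespace Matrix.PosSemidef

variable {n 𝕜 : Type*} [Fintype n] [DecidableEq n] [RCLike 𝕜] {A : Matrix n n 𝕜}

lemma posSemidef_sqrt (hA : A.PosSemidef) : hA.sqrt.PosSemidef := by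
  refine PosSemidef.mul_mul_conjTranspose_same (posSemidef_diagonal_iff.mpr fun i => ?_) _
  exact RCLike.ofReal_nonneg.mpr (Real.sqrt_nonneg _)

lemma sq_sqrt (hA : A.PosSemidef) : hA.sqrt ^ 2 = A := by
  have hdiag : diagonal (fun i => ((√(hA.1.eigenvalues i) : ℝ) : 𝕜)) ^ 2 =
      diagonal (RCLike.ofReal ∘ hA.1.eigenvalues) := by
    rw [diagonal_pow]
    congr 1
    funext i
    simp [← RCLike.ofReal_pow, Real.sq_sqrt (hA.eigenvalues_nonneg i)]
  conv_rhs => rw [hA.1.spectral_theorem, Unitary.conjStarAlgAut_apply, ← hdiag]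
  simp only [sqrt, sq, mul_assoc]
  rw [← mul_assoc (star _), Unitary.coe_star_mul_self, one_mul]

lemma re_apply_pow_three_le (hA : A.PosSemidef) (i : n) :
    RCLike.re (A i i) ^ 3 ≤ RCLike.re (hA.sqrt i i) ^ 2 * RCLike.re ((A * A) i i) := by
  set T := hA.posSemidef_sqrt.sqrt
  have hT : T.IsHermitian := hA.posSemidef_sqrt.posSemidef_sqrt.1
  have hT2 : T ^ 2 = hA.sqrt := hA.posSemidef_sqrt.sq_sqrt
  have hT4 : T ^ 4 = A := by rw [show 4 = 2 * 2 from rfl, pow_mul, hT2, hA.sq_sqrt]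
  have hT8 : T ^ 8 = A * A := by rw [show 8 = 4 + 4 from rfl, pow_add, hT4]
  have h13 := hT.re_pow_add_apply_sq_le 1 3 i
  have h24 := hT.re_pow_add_apply_sq_le 2 4 i
  rw [← hT2, ← hT8, ← hT4]
  exact pow_three_le_sq_mul_of_sq_le_mul (hT.re_pow_two_mul_apply_nonneg 2 i)
    (hT.re_pow_two_mul_apply_nonneg 4 i) h13 h24

end Matrix.PosSemidef

theorem stmt_3_general (n d : ℕ) (ψ : Fin n → EuclideanSpace ℂ (Fin d)) (hψ : ∀ i, ‖ψ i‖ = 1)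
    (p : Fin n → ℝ) (hp : ∀ i, 0 < p i)
    (G : Matrix (Fin n) (Fin n) ℂ)
    (hGdef : ∀ i j, G i j = (Real.sqrt (p i * p j) : ℂ) * (inner ℂ (ψ i) (ψ j) : ℂ))
    (hG : G.PosSemidef) :
    ∑ i, (p i) ^ 2 / (∑ j, p j * ‖(inner ℂ (ψ i) (ψ j) : ℂ)‖ ^ 2) ≤
      ∑ i, ((hG.sqrt i i).re) ^ 2 := by
  refine Finset.sum_le_sum fun i _ => ?_
  have hψi : inner ℂ (ψ i) (ψ i) = 1 := by
    rw [inner_self_eq_norm_sq_to_K, hψ i]; norm_num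
  have hGii : (G i i).re = p i := by
    rw [hGdef, hψi, mul_one, Real.sqrt_mul_self (hp i).le, Complex.ofReal_re]
  have hGGii : ((G * G) i i).re = p i * ∑ j, p j * ‖inner ℂ (ψ i) (ψ j)‖ ^ 2 := by
    have hrow : ((G * G) i i).re = ∑ j, ‖G i j‖ ^ 2 := by
      simpa only [hG.1.eq, RCLike.re_to_complex] using re_mul_conjTranspose_self_apply G i
    rw [hrow, Finset.mul_sum]
    refine Finset.sum_congr rfl fun j _ => ?_
    rw [hGdef, norm_mul, mul_pow, Complex.norm_real, Real.norm_eq_abs, sq_abs,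
      Real.sq_sqrt (mul_pos (hp i) (hp j)).le, mul_assoc]
  have hD : 0 < ∑ j, p j * ‖inner ℂ (ψ i) (ψ j)‖ ^ 2 :=
    Finset.sum_pos' (fun j _ => by have := hp j; positivity)
      ⟨i, Finset.mem_univ i, by rw [hψi, norm_one, one_pow, mul_one]; exact hp i⟩
  have hcube := hG.re_apply_pow_three_le i
  simp only [RCLike.re_to_complex, hGii, hGGii] at hcube
  rw [div_le_iff₀ hD]
  have := hp i
  nlinarith

theorem stmt_3 (n d : ℕ) (ψ : Fin n → EuclideanSpace ℂ (Fin d)) (hψ : ∀ i, ‖ψ i‖ = 1)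
    (p : Fin n → ℝ) (hp : ∀ i, 0 < p i) (hsum : ∑ i, p i = 1)
    (G : Matrix (Fin n) (Fin n) ℂ)
    (hGdef : ∀ i j, G i j = (Real.sqrt (p i * p j) : ℂ) * (inner ℂ (ψ i) (ψ j) : ℂ))
    (hG : G.PosSemidef) :
    ∑ i, (p i) ^ 2 / (∑ j, p j * ‖(inner ℂ (ψ i) (ψ j) : ℂ)‖ ^ 2) ≤
      ∑ i, ((hG.sqrt i i).re) ^ 2 :=
  stmt_3_general n d ψ hψ p hp G hGdef hG
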